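/- Existence criterion for spherical triangles. Let l₁₂, l₁₃, l₂₃ ∈ [0,π]. There exist unit vectors u₁, u₂, u₃ ∈ ℝ³ with arccos⟨u_i,u_j⟩ = l_{ij} for all i < j if and only if the triangle inequalities l₁₂ ≤ l₁₃ + l₂₃, l₁₃ ≤ l₁₂ + l₂₃, l₂₃ ≤ l₁₂ + l₁₃ hold and l₁₂ + l₁₃ + l₂₃ ≤ 2π. -/

import Mathlib

open Real
open scoped RealInnerProductSpace

/-!
For unit vectors `arccos ⟪x, y⟫` is the angle between `x` and `y`, which satisfies the triangle
inequality; applied through the antipode `-u 0`, where `angle (-x) y = π - angle x y`, it also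
bounds the perimeter by `2π`.

Conversely, put `u 0` at the pole and `u 1`, `u 2` at polar angles `l12`, `l13` with azimuths
`0`, `φ`. Then `⟪u 1, u 2⟫ = cos l12 cos l13 + sin l12 sin l13 cos φ`, which runs from
`cos (l12 - l13)` down to `cos (l12 + l13)` as `φ` goes from `0` to `π`; the four inequalities
put `cos l23` in between, so a suitable `φ` exists by the intermediate value
theorem.
-/

namespace InnerProductGeometry

variable {V : Type*} [NormedAddCommGroup V] [InnerProductSpace ℝ V]

theorem arccos_inner_of_norm_eq_one {x y : V} (hx : ‖x‖ = 1) (hy : ‖y‖ = 1) :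
    arccos ⟪x, y⟫ = angle x y := by
  simp [angle, hx, hy]

theorem angle_add_angle_add_angle_le_two_pi (x y z : V) :
    angle x y + angle x z + angle y z ≤ 2 * π := by
  have h := angle_le_angle_add_angle y (-x) z
  rw [angle_neg_right, angle_neg_left, angle_comm y x] at h
  linarith

end InnerProductGeometry

noncomputable def sphericalPoint (θ φ : ℝ) : EuclideanSpace ℝ (Fin 3) :=
  !₂[cos θ, sin θ * cos φ, sin θ * sin φ]

theorem inner_sphericalPoint (θ φ θ' φ' : ℝ) :
    ⟪sphericalPoint θ φ, sphericalPoint θ' φ'⟫ =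
      cos θ * cos θ' + sin θ * sin θ' * cos (φ - φ') := by
  simp only [sphericalPoint, PiLp.inner_apply, RCLike.inner_apply, ringHom_apply,
    Fin.sum_univ_three, Fin.isValue, Matrix.cons_val_zero, Matrix.cons_val_one, Matrix.cons_val,
    cos_sub]
  ring

theorem norm_sphericalPoint (θ φ : ℝ) : ‖sphericalPoint θ φ‖ = 1 := by
  have h : ⟪sphericalPoint θ φ, sphericalPoint θ φ⟫ = 1 := by
    rw [inner_sphericalPoint, sub_self, cos_zero]
    nlinarith [sin_sq_add_cos_sq θ]
  rw [real_inner_self_eq_norm_sq] at h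
  exact (pow_eq_one_iff_of_nonneg (norm_nonneg _) two_ne_zero).mp h

theorem cos_le_cos_sub {a b c : ℝ} (hab : a ≤ b + c) (hba : b ≤ a + c) (hc : c ≤ π) :
    cos c ≤ cos (a - b) := by
  rw [← cos_abs (a - b)]
  exact cos_le_cos_of_nonneg_of_le_pi (abs_nonneg _) hc
    (abs_sub_le_iff.mpr ⟨by linarith, by linarith⟩)

theorem cos_add_le_cos {a b c : ℝ} (hc : 0 ≤ c) (hcab : c ≤ a + b) (hsum : a + b + c ≤ 2 * π) :
    cos (a + b) ≤ cos c := by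
  rcases le_or_gt (a + b) π with h | h
  · exact cos_le_cos_of_nonneg_of_le_pi hc h hcab
  · rw [← cos_two_pi_sub]
    exact cos_le_cos_of_nonneg_of_le_pi hc (by linarith) (by linarith)

theorem exists_cos_eq_cos_mul_cos_add_sin_mul_sin_mul_cos {a b c : ℝ}
    (hc : c ∈ Set.Icc 0 π) (hab : a ≤ b + c) (hba : b ≤ a + c) (hcab : c ≤ a + b)
    (hsum : a + b + c ≤ 2 * π) :
    ∃ φ, cos c = cos a * cos b + sin a * sin b * cos φ := by
  set f : ℝ → ℝ := fun φ => cos a * cos b + sin a * sin b * cos φ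
  have hf0 : f 0 = cos (a - b) := by simp [f, cos_sub]
  have hfπ : f π = cos (a + b) := by
    simp only [f, cos_pi, cos_add]
    ring
  have hcont : ContinuousOn f (Set.Icc 0 π) := by fun_prop
  obtain ⟨φ, -, hφ⟩ := intermediate_value_Icc' pi_pos.le hcont
    ⟨hfπ ▸ cos_add_le_cos hc.1 hcab hsum, hf0 ▸ cos_le_cos_sub hab hba hc.2⟩
  exact ⟨φ, hφ.symm⟩

theorem spherical_triangle_exists_iff (l12 l13 l23 : ℝ)
    (h12 : l12 ∈ Set.Icc 0 π) (h13 : l13 ∈ Set.Icc 0 π) (h23 : l23 ∈ Set.Icc 0 π) :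
    (∃ u : Fin 3 → EuclideanSpace ℝ (Fin 3),
      (∀ i, ‖u i‖ = 1) ∧
      Real.arccos ⟪u 0, u 1⟫ = l12 ∧
      Real.arccos ⟪u 0, u 2⟫ = l13 ∧
      Real.arccos ⟪u 1, u 2⟫ = l23) ↔
    (l12 ≤ l13 + l23 ∧ l13 ≤ l12 + l23 ∧ l23 ≤ l12 + l13 ∧ l12 + l13 + l23 ≤ 2 * π) := by
  open InnerProductGeometry in
  constructor
  · rintro ⟨u, hu, rfl, rfl, rfl⟩
    simp only [arccos_inner_of_norm_eq_one (hu _) (hu _)]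
    refine ⟨?_, angle_le_angle_add_angle _ _ _, ?_, angle_add_angle_add_angle_le_two_pi _ _ _⟩
    · simpa only [angle_comm (u 2)] using angle_le_angle_add_angle (u 0) (u 2) (u 1)
    · simpa only [angle_comm (u 1)] using angle_le_angle_add_angle (u 1) (u 0) (u 2)
  · rintro ⟨t12, t13, t23, tsum⟩
    obtain ⟨φ, hφ⟩ := exists_cos_eq_cos_mul_cos_add_sin_mul_sin_mul_cos h23 t12 t13 t23 tsum
    refine ⟨![sphericalPoint 0 0, sphericalPoint l12 0, sphericalPoint l13 φ],
      fun i => by fin_cases i <;> exact norm_sphericalPoint _ _, ?_, ?_, ?_⟩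
    · simpa [inner_sphericalPoint] using arccos_cos h12.1 h12.2
    · simpa [inner_sphericalPoint] using arccos_cos h13.1 h13.2
    · simpa [inner_sphericalPoint, ← hφ] using arccos_cos h23.1 h23.2
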